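/- arXiv:2601.20154 — 3 statements merged into one kernel-verified Lean document; each statement's English description precedes it below -/
import Mathlib

section
/- Let φ: X → ℝ^d with A = E[φ(x)φ(x)^T] = U Λ U^T, and define ξ(x) = U^T φ(x). If P(x,x')/(P(x)P(x')) = ⟨φ(x), φ(x')⟩, then the eigenfunction fixed-point equation holds: ∫ T(x,x') √(P(x')) ξ(x') dx' = Λ √(P(x)) ξ(x), where T(x,x') = P(x,x')/√(P(x)P(x')). -/
/-!
Because `T(x,x') √P(x') = √P(x) ⟨φ(x), φ(x')⟩ P(x')` and `ξᵢ(x') = ⟨Uᵀᵢ, φ(x')⟩`, the left side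
is `√P(x)` times the second-moment bilinear form `v ⬝ᵥ A w` at `v = Uᵀᵢ`, `w = φ(x)`, and
`Uᵀ A = Uᵀ U Λ Uᵀ = Λ Uᵀ`. The one analytic point is integrability of the moments `φⱼ φₖ P`:
it is available only against the kernel functionals `x' ↦ ⟨φ(x), φ(x')⟩`, but these
span all functionals on the span of the image of `φ`, and any vector pairs with `φ(x')` exactly as
its orthogonal projection onto that span does.
-/

open MeasureTheory Matrix

theorem kernel_mul_sqrt_eq {ι X : Type*} [Fintype ι] (φ : X → ι → ℝ) {p : X → ℝ}
    (hp : ∀ x, 0 < p x) {Pj T : X → X → ℝ}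
    (hPMI : ∀ x x', Pj x x' / (p x * p x') = φ x ⬝ᵥ φ x')
    (hT : ∀ x x', T x x' = Pj x x' / Real.sqrt (p x * p x')) (x x' : X) :
    T x x' * Real.sqrt (p x') = Real.sqrt (p x) * ((φ x ⬝ᵥ φ x') * p x') := by
  have hsx : 0 < Real.sqrt (p x) := Real.sqrt_pos.mpr (hp x)
  have hsx' : 0 < Real.sqrt (p x') := Real.sqrt_pos.mpr (hp x')
  have hPj : Pj x x' = (φ x ⬝ᵥ φ x') * (p x * p x') :=
    (div_eq_iff (mul_pos (hp x) (hp x')).ne').mp (hPMI x x')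
  rw [hT, hPj, Real.sqrt_mul (hp x).le]
  field_simp
  rw [Real.sq_sqrt (hp x).le]
  ring

section

variable {X : Type*} [MeasurableSpace X] {μ : Measure X}

theorem integrable_inner_mul_of_integrable_kernel {E : Type*} [NormedAddCommGroup E]
    [InnerProductSpace ℝ E] [FiniteDimensional ℝ E] {ψ : X → E} {g : X → ℝ}
    (h : ∀ x, Integrable (fun x' => inner ℝ (ψ x) (ψ x') * g x') μ) (v : E) :
    Integrable (fun x' => inner ℝ v (ψ x') * g x') μ := by
  set V := Submodule.span ℝ (Set.range ψ)
  have hV : ∀ w ∈ V, Integrable (fun x' => inner ℝ w (ψ x') * g x') μ := by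
    intro w hw
    induction hw using Submodule.span_induction with
    | mem w hw => obtain ⟨x, rfl⟩ := hw; exact h x
    | zero => simp only [inner_zero_left, zero_mul]; exact integrable_zero X ℝ μ
    | add a b _ _ ha hb => simp only [inner_add_left, add_mul]; exact ha.add hb
    | smul c a _ ha => simpa only [real_inner_smul_left, mul_assoc] using ha.const_mul c
  -- `v` and its projection onto `V` pair identically with every `ψ x'`.
  refine (hV _ (V.starProjection_apply_mem v)).congr (Filter.Eventually.of_forall fun x' => ?_)
  dsimp only
  rw [V.inner_starProjection_left_eq_right,
    V.starProjection_eq_self_iff.mpr (Submodule.subset_span ⟨x', rfl⟩)]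

variable {ι : Type*} [Fintype ι]

theorem integrable_dotProduct_mul_of_integrable_kernel {φ : X → ι → ℝ} {g : X → ℝ}
    (h : ∀ x, Integrable (fun x' => (φ x ⬝ᵥ φ x') * g x') μ) (v : ι → ℝ) :
    Integrable (fun x' => (v ⬝ᵥ φ x') * g x') μ := by
  have hinner (u w : ι → ℝ) : inner ℝ (WithLp.toLp 2 u) (WithLp.toLp 2 w) = u ⬝ᵥ w := by
    rw [EuclideanSpace.inner_toLp_toLp, star_trivial, dotProduct_comm]
  simpa only [hinner] using integrable_inner_mul_of_integrable_kernel
    (ψ := fun x => WithLp.toLp 2 (φ x)) (by simpa only [hinner] using h) (WithLp.toLp 2 v)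

theorem integrable_mul_mul_of_integrable_kernel {φ ξ : X → ι → ℝ} {g : X → ℝ}
    {M : Matrix ι ι ℝ} (hφ : ∀ x, φ x = M *ᵥ ξ x)
    (h : ∀ x i, Integrable (fun x' => (φ x ⬝ᵥ φ x') * (g x' * ξ x' i)) μ) (j k : ι) :
    Integrable (fun x' => φ x' j * φ x' k * g x') μ := by
  classical
  refine (integrable_finsetSum Finset.univ fun i _ =>
    ((integrable_dotProduct_mul_of_integrable_kernel (fun x => h x i)
      (Pi.single j 1)).const_mul (M k i))).congr (Filter.Eventually.of_forall fun x' => ?_)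
  have hφk : φ x' k = ∑ i, M k i * ξ x' i := by rw [hφ]; rfl
  simp only [single_one_dotProduct]
  rw [hφk, Finset.mul_sum, Finset.sum_mul]
  exact Finset.sum_congr rfl fun i _ => by ring

theorem integral_dotProduct_mul_dotProduct_mul {φ : X → ι → ℝ} {g : X → ℝ}
    (h : ∀ j k, Integrable (fun x => φ x j * φ x k * g x) μ) (v w : ι → ℝ) :
    ∫ x, (v ⬝ᵥ φ x) * (w ⬝ᵥ φ x) * g x ∂μ =
      v ⬝ᵥ (Matrix.of (fun j k => ∫ x, φ x j * φ x k * g x ∂μ) *ᵥ w) := by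
  have hexpand : ∀ x, (v ⬝ᵥ φ x) * (w ⬝ᵥ φ x) * g x =
      ∑ j, ∑ k, v j * w k * (φ x j * φ x k * g x) := by
    intro x
    rw [dotProduct, dotProduct, Finset.sum_mul_sum, Finset.sum_mul]
    refine Finset.sum_congr rfl fun j _ => ?_
    rw [Finset.sum_mul]
    exact Finset.sum_congr rfl fun k _ => by ring
  simp only [hexpand]
  rw [integral_finsetSum _ fun j _ => integrable_finsetSum _ fun k _ => (h j k).const_mul _]
  simp only [dotProduct, mulVec, of_apply, Finset.mul_sum]
  refine Finset.sum_congr rfl fun j _ => ?_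
  rw [integral_finsetSum _ fun k _ => (h j k).const_mul _]
  exact Finset.sum_congr rfl fun k _ => by rw [integral_const_mul]; ring

end

/-- With `A = E_{P(x)}[φ(x)φ(x)ᵀ] = U Λ Uᵀ` and `ξ(x) = Uᵀ φ(x)`, if
`P(x,x')/(P(x)P(x')) = ⟨φ(x),φ(x')⟩` then the eigenfunction fixed-point equation holds:
`∫ T(x,x') √(P(x')) ξ(x') dx' = Λ √(P(x)) ξ(x)`, where
`T(x,x') = P(x,x')/√(P(x)P(x'))`. -/
theorem stmt6
    {X : Type*} [MeasurableSpace X]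
    (μ : Measure X)                  -- base measure
    (d : ℕ) (φ : X → Fin d → ℝ)
    (p : X → ℝ)                      -- the (common) marginal density P(x)
    (Pj : X → X → ℝ)                 -- joint density P(x,x')
    (hp : ∀ x, 0 < p x)
    (hPMI : ∀ x x', Pj x x' / (p x * p x') = φ x ⬝ᵥ φ x')
    (U Λ : Matrix (Fin d) (Fin d) ℝ)
    (hU : Uᵀ * U = 1)
    (hA : ∀ i j : Fin d, (∫ x, φ x i * φ x j * p x ∂μ) = (U * Λ * Uᵀ) i j)
    (ξ : X → Fin d → ℝ)
    (hξ : ∀ x, ξ x = Uᵀ.mulVec (φ x))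
    (T : X → X → ℝ)
    (hT : ∀ x x', T x x' = Pj x x' / Real.sqrt (p x * p x'))
    (hInt : ∀ (x : X) (i : Fin d),
      Integrable (fun x' => T x x' * Real.sqrt (p x') * ξ x' i) μ) :
    ∀ (x : X) (i : Fin d),
      (∫ x', T x x' * Real.sqrt (p x') * ξ x' i ∂μ) =
        (Λ.mulVec (ξ x)) i * Real.sqrt (p x) := by
  have hkernel := kernel_mul_sqrt_eq φ hp hPMI hT
  have hφ (x' : X) : φ x' = U *ᵥ ξ x' := by
    rw [hξ, mulVec_mulVec, mul_eq_one_comm.mp hU, one_mulVec]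
  have hkernel_ξ (x : X) (i : Fin d) :
      Integrable (fun x' => (φ x ⬝ᵥ φ x') * (p x' * ξ x' i)) μ := by
    refine ((hInt x i).const_mul (Real.sqrt (p x))⁻¹).congr
      (Filter.Eventually.of_forall fun x' => ?_)
    have hsx : Real.sqrt (p x) ≠ 0 := (Real.sqrt_pos.mpr (hp x)).ne'
    simp only [hkernel]
    field_simp
  have hmoment := integrable_mul_mul_of_integrable_kernel hφ hkernel_ξ
  have hA' : Matrix.of (fun j k => ∫ x', φ x' j * φ x' k * p x' ∂μ) = U * Λ * Uᵀ :=
    Matrix.ext hA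
  intro x i
  calc (∫ x', T x x' * Real.sqrt (p x') * ξ x' i ∂μ)
      = ∫ x', Real.sqrt (p x) * ((Uᵀ i ⬝ᵥ φ x') * (φ x ⬝ᵥ φ x') * p x') ∂μ := by
        refine integral_congr_ae (Filter.Eventually.of_forall fun x' => ?_)
        simp only [hkernel, hξ, mulVec]
        ring
    _ = Real.sqrt (p x) * (Uᵀ *ᵥ ((U * Λ * Uᵀ) *ᵥ φ x)) i := by
        rw [integral_const_mul, integral_dotProduct_mul_dotProduct_mul hmoment, hA']
        rfl
    _ = (Λ *ᵥ ξ x) i * Real.sqrt (p x) := by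
        rw [mulVec_mulVec, ← Matrix.mul_assoc, ← Matrix.mul_assoc, hU, Matrix.one_mul, hξ,
          mulVec_mulVec, mul_comm]
end

section
/- For f(u) = (u−1)², the convex conjugate is f*(t) = t²/4 + t, and f'(u) = 2(u−1); consequently the variational χ²-divergence objective with the parametrization g(x,x') = 2⟨φ(x),φ(x')⟩ − 2 equals (up to additive constant and positive scaling) 2 E_{P(x,x')}[⟨φ(x),φ(x')⟩] − E_{P(x)P(x')}[⟨φ(x),φ(x')⟩²], i.e., the negative spectral contrastive loss up to constants. -/
open MeasureTheory Matrix

/-- For `f(u) = (u−1)²` the Legendre conjugate is `f*(t) = t²/4 + t` and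
`f'(u) = 2(u−1)`; hence the variational χ²-objective with critic
`g(x,x') = 2⟨φ(x),φ(x')⟩ − 2` equals
`2 E_{P(x,x')}[⟨φ(x),φ(x')⟩] − E_{P(x)P(x')}[⟨φ(x),φ(x')⟩²] − 1`,
i.e. the negative spectral contrastive loss up to an additive constant. -/
theorem stmt10
    {X : Type*} [MeasurableSpace X]
    (P Q : Measure (X × X)) [IsProbabilityMeasure P] [IsProbabilityMeasure Q]
    -- P is the joint P(x,x'), Q the product of marginals P(x)P(x')
    (d : ℕ) (φ : X → Fin d → ℝ)
    (hIntP : Integrable (fun q : X × X => φ q.1 ⬝ᵥ φ q.2) P)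
    (hIntQ : Integrable (fun q : X × X => (φ q.1 ⬝ᵥ φ q.2) ^ 2) Q)
    (hIntQ' : Integrable (fun q : X × X => φ q.1 ⬝ᵥ φ q.2) Q) :
    -- (i) conjugate of f(u) = (u-1)^2
    (∀ t : ℝ, sSup {y : ℝ | ∃ u : ℝ, y = u * t - (u - 1) ^ 2} = t ^ 2 / 4 + t) ∧
    -- (ii) derivative
    (∀ u : ℝ, deriv (fun v : ℝ => (v - 1) ^ 2) u = 2 * (u - 1)) ∧
    -- (iii) variational objective with g = f'(⟨φ,φ⟩) = 2⟨φ,φ⟩ − 2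
    ((∫ q : X × X, (2 * (φ q.1 ⬝ᵥ φ q.2) - 2) ∂P)
        - ∫ q : X × X, ((2 * (φ q.1 ⬝ᵥ φ q.2) - 2) ^ 2 / 4
            + (2 * (φ q.1 ⬝ᵥ φ q.2) - 2)) ∂Q =
      2 * (∫ q : X × X, φ q.1 ⬝ᵥ φ q.2 ∂P)
        - (∫ q : X × X, (φ q.1 ⬝ᵥ φ q.2) ^ 2 ∂Q) - 1) := by
  refine ⟨?_, ?_, ?_⟩
  · intro t
    apply IsGreatest.csSup_eq
    constructor
    · exact ⟨1 + t / 2, by ring⟩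
    · rintro y ⟨u, rfl⟩
      nlinarith [sq_nonneg (u - 1 - t / 2)]
  · intro u
    have h : HasDerivAt (fun v : ℝ => (v - 1) ^ 2) (2 * (u - 1) ^ 1 * 1) u :=
      (((hasDerivAt_id u).sub_const 1).pow 2).congr_deriv (by simp)
    simpa using h.deriv
  · have heq : ∀ q : X × X, (2 * (φ q.1 ⬝ᵥ φ q.2) - 2) ^ 2 / 4
        + (2 * (φ q.1 ⬝ᵥ φ q.2) - 2) = (φ q.1 ⬝ᵥ φ q.2) ^ 2 - 1 := by
      intro q; ring
    rw [show (fun q : X × X => (2 * (φ q.1 ⬝ᵥ φ q.2) - 2) ^ 2 / 4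
        + (2 * (φ q.1 ⬝ᵥ φ q.2) - 2)) = (fun q : X × X => (φ q.1 ⬝ᵥ φ q.2) ^ 2 - 1)
      from funext heq] at *
    rw [show (fun q : X × X => 2 * (φ q.1 ⬝ᵥ φ q.2) - 2)
        = (fun q : X × X => 2 * (φ q.1 ⬝ᵥ φ q.2) - 2) from rfl]
    rw [integral_sub (hIntP.const_mul 2) (integrable_const 2),
        integral_sub hIntQ (integrable_const 1),
        MeasureTheory.integral_const_mul, integral_const, integral_const]
    simp
    ring
end

section
/- The exponential kernel admits the Gaussian random-feature decomposition: for a, b ∈ ℝ^d, exp(a^T b) = E_{ω ~ N(0, I_d)}[ φ_ω(a) conj(φ_ω(b)) ] where φ_ω(u) = exp(−i ω^T u) exp(‖u‖²/2); equivalently, exp(‖a‖²/2 + ‖b‖²/2) E_{ω}[exp(−i ω^T (a − b))] = exp(‖a‖²/2 + ‖b‖²/2) exp(−‖a−b‖²/2) = exp(a^T b). -/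
/-!
The feature product `φ_ω(a) conj(φ_ω(b))` equals `exp((‖a‖² + ‖b‖²)/2) exp(−i ωᵀ(a − b))`, and the
characteristic function of the standard Gaussian evaluates the expectation of the second factor to
`exp(−‖a − b‖²/2)`. Expanding `‖a − b‖² = ‖a‖² + ‖b‖² − 2 aᵀb` leaves `exp(aᵀb)`.
-/

open MeasureTheory Matrix ProbabilityTheory Complex

theorem integral_cexp_neg_I_dotProduct_pi_gaussianReal {ι : Type*} [Fintype ι] (v : ι → ℝ) :
    ∫ ω : ι → ℝ, cexp (-I * ((ω ⬝ᵥ v : ℝ) : ℂ)) ∂(Measure.pi fun _ : ι => gaussianReal 0 1) =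
      (Real.exp (-(∑ i, v i ^ 2) / 2) : ℂ) := by
  calc _ = ∫ ω : ι → ℝ, cexp (inner ℝ (WithLp.toLp 2 ω) (WithLp.toLp 2 (-v)) * I)
        ∂(Measure.pi fun _ : ι => gaussianReal 0 1) := by
        congr with ω
        simp [EuclideanSpace.inner_eq_star_dotProduct, dotProduct_comm v, mul_comm]
    _ = charFun (stdGaussian (EuclideanSpace ℝ ι)) (WithLp.toLp 2 (-v)) := by
        rw [← map_pi_eq_stdGaussian, charFun_apply, integral_map (by fun_prop) (by fun_prop)]
    _ = _ := by
        rw [charFun_stdGaussian, ← ofReal_pow, EuclideanSpace.real_norm_sq_eq]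
        push_cast
        simp

theorem sum_sub_sq_eq {ι : Type*} [Fintype ι] (a b : ι → ℝ) :
    ∑ i, (a i - b i) ^ 2 = ∑ i, a i ^ 2 + ∑ i, b i ^ 2 - 2 * (a ⬝ᵥ b) := by
  simp only [dotProduct, Finset.mul_sum, ← Finset.sum_add_distrib, ← Finset.sum_sub_distrib]
  exact Finset.sum_congr rfl fun i _ => by ring

theorem exp_half_sum_sq_add_mul_exp_neg_half_sum_sub_sq {ι : Type*} [Fintype ι] (a b : ι → ℝ) :
    Real.exp ((∑ i, a i ^ 2) / 2 + (∑ i, b i ^ 2) / 2) *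
      Real.exp (-(∑ i, (a i - b i) ^ 2) / 2) = Real.exp (a ⬝ᵥ b) := by
  rw [← Real.exp_add, sum_sub_sq_eq]
  ring_nf

theorem cexp_neg_I_mul_cexp_half_mul_conj (x y s t : ℝ) :
    (cexp (-I * (x : ℂ)) * cexp ((s : ℂ) / 2)) *
        starRingEnd ℂ (cexp (-I * (y : ℂ)) * cexp ((t : ℂ) / 2)) =
      (Real.exp (s / 2 + t / 2) : ℂ) * cexp (-I * ((x - y : ℝ) : ℂ)) := by
  rw [map_mul, ← exp_conj, ← exp_conj, ofReal_exp, ← exp_add, ← exp_add, ← exp_add, ← exp_add]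
  simp only [map_mul, map_neg, conj_I, conj_ofReal, map_div₀, map_ofNat]
  push_cast
  ring_nf

/-- Gaussian random-feature decomposition of the exponential kernel:
for `a, b ∈ ℝ^d` and `φ_ω(u) = exp(−i ωᵀu) exp(‖u‖²/2)`,
`exp(aᵀb) = E_{ω ~ N(0, I_d)}[ φ_ω(a) conj(φ_ω(b)) ]`; equivalently
`exp(‖a‖²/2 + ‖b‖²/2) E_ω[exp(−i ωᵀ(a−b))] = exp(‖a‖²/2 + ‖b‖²/2) exp(−‖a−b‖²/2)
  = exp(aᵀb)`. -/
theorem stmt12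
    (d : ℕ) (a b : Fin d → ℝ) :
    ((Real.exp (a ⬝ᵥ b) : ℂ) =
      ∫ ω : Fin d → ℝ,
        (Complex.exp (-Complex.I * ((ω ⬝ᵥ a : ℝ) : ℂ)) *
            Complex.exp ((((∑ i, a i ^ 2) : ℝ) : ℂ) / 2)) *
          (starRingEnd ℂ)
            (Complex.exp (-Complex.I * ((ω ⬝ᵥ b : ℝ) : ℂ)) *
              Complex.exp ((((∑ i, b i ^ 2) : ℝ) : ℂ) / 2))
        ∂(Measure.pi fun _ : Fin d => gaussianReal 0 1)) ∧
    ((Real.exp ((∑ i, a i ^ 2) / 2 + (∑ i, b i ^ 2) / 2) : ℂ) *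
        ∫ ω : Fin d → ℝ,
          Complex.exp (-Complex.I * ((ω ⬝ᵥ (a - b) : ℝ) : ℂ))
        ∂(Measure.pi fun _ : Fin d => gaussianReal 0 1) =
      (Real.exp ((∑ i, a i ^ 2) / 2 + (∑ i, b i ^ 2) / 2) : ℂ) *
        (Real.exp (-(∑ i, (a i - b i) ^ 2) / 2) : ℂ)) ∧
    (Real.exp ((∑ i, a i ^ 2) / 2 + (∑ i, b i ^ 2) / 2) *
        Real.exp (-(∑ i, (a i - b i) ^ 2) / 2) = Real.exp (a ⬝ᵥ b)) := by
  have hkernel := exp_half_sum_sq_add_mul_exp_neg_half_sum_sub_sq a b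
  have hchar : ∫ ω : Fin d → ℝ, cexp (-I * ((ω ⬝ᵥ (a - b) : ℝ) : ℂ))
      ∂(Measure.pi fun _ : Fin d => gaussianReal 0 1) =
        (Real.exp (-(∑ i, (a i - b i) ^ 2) / 2) : ℂ) := by
    simpa using integral_cexp_neg_I_dotProduct_pi_gaussianReal (a - b)
  refine ⟨?_, by rw [hchar], hkernel⟩
  simp_rw [cexp_neg_I_mul_cexp_half_mul_conj, ← dotProduct_sub]
  rw [integral_const_mul, hchar, ← ofReal_mul, hkernel]
end
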